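/- arXiv:1809.01227 — 4 statements merged into one kernel-verified Lean document; each statement's English description precedes it below -/
import Mathlib

section
/- If G is a graph on n ≥ 3 vertices with minimum degree δ(G) ≥ (n-1)/2, then G is traceable, i.e., contains a Hamiltonian path. -/
open SimpleGraph Finset Matrix

variable {V : Type*} [Fintype V] [DecidableEq V]

def SimpleGraph.IsHamiltonianConnected (G : SimpleGraph V) : Prop :=
  ∀ u v : V, u ≠ v → ∃ p : G.Walk u v, p.IsHamiltonian

def SimpleGraph.IsTraceable (G : SimpleGraph V) : Prop :=
  ∃ (u v : V) (p : G.Walk u v), p.IsHamiltonian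

def SimpleGraph.IsHomogeneouslyTraceable (G : SimpleGraph V) : Prop :=
  ∀ u : V, ∃ (v : V) (p : G.Walk u v), p.IsHamiltonian

/-- `G` is `k`-connected: more than `k` vertices, and removing fewer than `k`
vertices leaves a connected graph. -/
def SimpleGraph.IsKConnected (G : SimpleGraph V) (k : ℕ) : Prop :=
  k < Fintype.card V ∧
    ∀ S : Finset V, S.card < k → (G.induce ((↑S : Set V)ᶜ)).Connected

def SimpleGraph.IsIndependentSet (G : SimpleGraph V) (s : Finset V) : Prop :=
  ∀ u ∈ s, ∀ v ∈ s, ¬ G.Adj u v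

noncomputable def lapHerm (G : SimpleGraph V) [DecidableRel G.Adj] :
    (G.lapMatrix ℝ).IsHermitian := (G.posSemidef_lapMatrix ℝ).1

/-- Laplacian spectral radius μ₁. -/
noncomputable def lapSpecRad (G : SimpleGraph V) [DecidableRel G.Adj] : ℝ :=
  ⨆ i, (lapHerm G).eigenvalues i

noncomputable def adjHerm (G : SimpleGraph V) [DecidableRel G.Adj] :
    (G.adjMatrix ℝ).IsHermitian := by
  rw [Matrix.IsHermitian, conjTranspose_eq_transpose_of_trivial, isSymm_adjMatrix]

/-- Adjacency spectral radius λ₁. -/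
noncomputable def adjSpecRad (G : SimpleGraph V) [DecidableRel G.Adj] : ℝ :=
  ⨆ i, (adjHerm G).eigenvalues i

/-- Smallest adjacency eigenvalue λ_n. -/
noncomputable def adjSpecMin (G : SimpleGraph V) [DecidableRel G.Adj] : ℝ :=
  ⨅ i, (adjHerm G).eigenvalues i

/-- The join `K₁ ∇ G`: a new universal vertex added to `G`. -/
def joinK1 (G : SimpleGraph V) : SimpleGraph (Option V) where
  Adj a b := match a, b with
    | none, none => False
    | none, some _ => True
    | some _, none => True
    | some u, some v => G.Adj u v
  symm := ⟨by rintro (_|u) (_|v) h <;> simp_all [G.adj_symm]⟩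
  loopless := ⟨by rintro (_|u) h <;> simp_all⟩

/-!
Ore's condition, `deg u + deg v ≥ n - 1` for all non-adjacent `u ≠ v`, already suffices. We
grow a path, kept as a duplicate-free list of vertices, one vertex at a time. If the path
`a = x₀, …, x_{m-1} = b` cannot be extended at an end, all neighbours of `a` and `b` lie on it,
and since `deg a + deg b ≥ m` the pigeonhole principle gives an `i` with `a ~ x_{i+1}` and
`b ~ x_i`; then `x₀, …, x_i, b, …, x_{i+1}` closes up to a cycle through the same vertices. A
vertex `u` off the path has a neighbour `w` on it, since otherwise `u` and `a` would have a common
neighbour, which lies on the path. Opening the cycle at `w` and prepending `u` gives a longer path.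
-/

theorem List.card_le_card_filter_getD {α : Type*} [DecidableEq α] (t : List α) (d : α)
    {s : Finset α} (hs : ∀ x ∈ s, x ∈ t) :
    #s ≤ #{i ∈ Finset.range t.length | t.getD i d ∈ s} := by
  calc #s ≤ #(({i ∈ Finset.range t.length | t.getD i d ∈ s}).image (t.getD · d)) := by
        refine Finset.card_le_card fun x hx => ?_
        obtain ⟨i, hi, rfl⟩ := List.getElem_of_mem (hs x hx)
        exact mem_image.2 ⟨i, by simp [hi, hx], by simp [hi]⟩
    _ ≤ _ := card_image_le

theorem Cycle.Chain.exists_isChain_cons {α : Type*} {r : α → α → Prop} {c : List α}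
    (hc : Cycle.Chain r (c : Cycle α)) {w : α} (hw : w ∈ c) :
    ∃ l, (w :: l).Perm c ∧ (w :: l).IsChain r := by
  obtain ⟨x, y, rfl⟩ := List.append_of_mem hw
  have hrot : ((x ++ w :: y : List α) : Cycle α) = (w :: (y ++ x) : List α) :=
    Cycle.coe_eq_coe.2 (by simpa using List.isRotated_append (l := x) (l' := w :: y))
  rw [hrot, Cycle.chain_coe_cons] at hc
  exact ⟨y ++ x, by simpa using List.perm_append_comm (l₁ := w :: y) (l₂ := x),
    hc.prefix ⟨[w], by simp⟩⟩

theorem List.IsChain.cycleChain_append_reverse {α : Type*} {r : α → α → Prop} [Std.Symm r]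
    {p q : List α} (hpq : (p ++ q).IsChain r) (hp : p ≠ []) (hq : q ≠ [])
    (hhead : r (p.head hp) (q.head hq)) (hlast : r (p.getLast hp) (q.getLast hq)) :
    Cycle.Chain r (p ++ q.reverse : List α) := by
  have hchain : (p ++ q.reverse).IsChain r :=
    hpq.left_of_append.append
      (List.isChain_reverse.2 (hpq.right_of_append.imp fun _ _ h => symm h))
      (by simpa [List.getLast?_eq_some_getLast hp, List.head?_reverse,
        List.getLast?_eq_some_getLast hq] using hlast)
  obtain ⟨q₀, q, rfl⟩ := List.exists_cons_of_ne_nil hq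
  rw [List.reverse_cons, ← List.append_assoc, ← Cycle.coe_cons_eq_coe_append,
    Cycle.chain_coe_cons, List.append_assoc, ← List.reverse_cons]
  exact hchain.cons_of_ne_nil (by simp [hp])
    (by simpa [List.head_append_of_ne_nil hp] using symm hhead)

namespace SimpleGraph

variable (G : SimpleGraph V)

theorem isTraceable_of_nodup_of_isChain {l : List V} (hnd : l.Nodup) (hl : l.IsChain G.Adj)
    (hne : l ≠ []) (hlen : l.length = Fintype.card V) : G.IsTraceable := by
  have hmem : ∀ w, w ∈ l := by
    have : l.toFinset = univ := eq_univ_of_card _ (by rw [List.toFinset_card_of_nodup hnd, hlen])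
    exact fun w => List.mem_toFinset.1 (this ▸ mem_univ w)
  refine ⟨_, _, Walk.ofSupport l hne hl, ?_⟩
  refine (Walk.IsPath.mk' ?_).isHamiltonian_of_mem fun w => ?_ <;> rw [Walk.support_ofSupport]
  exacts [hnd, hmem w]

variable [DecidableRel G.Adj]

theorem exists_adj_adj_of_card_le_degree_add_degree {u v : V} (hne : u ≠ v) (huv : ¬G.Adj u v)
    (hdeg : Fintype.card V ≤ G.degree u + G.degree v + 1) : ∃ w, G.Adj u w ∧ G.Adj v w := by
  have hvu : ¬G.Adj v u := fun h => huv h.symm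
  have hsub : ∀ x, x = u ∨ x = v → x ∉ G.neighborFinset u ∧ x ∉ G.neighborFinset v := by
    rintro x (rfl | rfl) <;> simp [huv, hvu]
  obtain ⟨w, hw⟩ := inter_nonempty_of_card_lt_card_add_card (s := {u, v}ᶜ)
    (fun x hx => by simpa using fun h => (hsub x h).1 hx)
    (fun x hx => by simpa using fun h => (hsub x h).2 hx)
    (by have := card_le_univ ({u, v} : Finset V)
        rw [card_compl, card_pair hne, card_neighborFinset_eq_degree,
          card_neighborFinset_eq_degree] at *
        omega)
  exact ⟨w, by simpa using hw⟩

theorem exists_perm_cycleChain_of_length_le_degree_add_degree {l : List V}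
    (hl : l.IsChain G.Adj) (hne : l ≠ [])
    (ha : ∀ x, G.Adj (l.head hne) x → x ∈ l) (hb : ∀ x, G.Adj (l.getLast hne) x → x ∈ l)
    (hdeg : l.length ≤ G.degree (l.head hne) + G.degree (l.getLast hne)) :
    ∃ c : List V, c.Perm l ∧ Cycle.Chain G.Adj c := by
  set a := l.head hne
  set b := l.getLast hne
  have hA := l.tail.card_le_card_filter_getD a (s := G.neighborFinset a) fun x hx => by
    rw [mem_neighborFinset] at hx
    have hxl := ha x hx
    rw [← List.cons_head_tail hne] at hxl
    exact (List.mem_cons.1 hxl).resolve_left (G.ne_of_adj hx).symm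
  have hB := l.dropLast.card_le_card_filter_getD a (s := G.neighborFinset b) fun x hx => by
    rw [mem_neighborFinset] at hx
    exact List.mem_dropLast_of_mem_of_ne_getLast (hb x hx) (G.ne_of_adj hx).symm
  rw [card_neighborFinset_eq_degree, List.length_tail] at hA
  rw [card_neighborFinset_eq_degree, List.length_dropLast] at hB
  have hcard : #(range (l.length - 1)) < G.degree a + G.degree b := by
    have := List.length_pos_of_ne_nil hne
    rw [card_range]; omega
  obtain ⟨i, hi⟩ := inter_nonempty_of_card_lt_card_add_card (filter_subset _ _)
    (filter_subset _ _) (hcard.trans_le (add_le_add hA hB))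
  simp only [mem_inter, mem_filter, mem_range] at hi
  obtain ⟨⟨him, hai⟩, -, hbi⟩ := hi
  rw [List.getD_eq_getElem _ _ (by simpa using him), List.getElem_tail] at hai
  rw [List.getD_eq_getElem _ _ (by simpa using him), List.getElem_dropLast] at hbi
  rw [mem_neighborFinset] at hai hbi
  set p := l.take (i + 1)
  set q := l.drop (i + 1)
  have hpq : p ++ q = l := List.take_append_drop _ _
  refine ⟨p ++ q.reverse, ((List.reverse_perm q).append_left p).trans (.of_eq hpq), ?_⟩
  have : Std.Symm G.Adj := G.symm
  refine (hpq ▸ hl : (p ++ q).IsChain G.Adj).cycleChain_append_reverse (by simp [p, hne])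
    (by simp [q]; omega) (by simpa [p, q, List.head_take] using hai) ?_
  simpa [p, q, List.getLast_take, List.getLast_drop,
    List.getElem?_eq_getElem (by omega : i < l.length)] using hbi.symm

theorem exists_mem_adj_of_ore
    (hG : ∀ u v, u ≠ v → ¬G.Adj u v → Fintype.card V ≤ G.degree u + G.degree v + 1)
    {l : List V} {a u : V} (hal : a ∈ l) (ha : ∀ x, G.Adj a x → x ∈ l) (hu : u ∉ l) :
    ∃ w ∈ l, G.Adj u w := by
  by_contra! h
  have hua : u ≠ a := fun e => hu (e ▸ hal)
  obtain ⟨y, huy, hay⟩ :=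
    G.exists_adj_adj_of_card_le_degree_add_degree hua (h a hal) (hG u a hua (h a hal))
  exact h y (ha y hay) huy

theorem exists_perm_cycleChain_of_ore
    (hG : ∀ u v, u ≠ v → ¬G.Adj u v → Fintype.card V ≤ G.degree u + G.degree v + 1)
    {l : List V} (hnd : l.Nodup) (hl : l.IsChain G.Adj) (hne : l ≠ [])
    (hlen : 2 ≤ l.length) (hcard : l.length < Fintype.card V)
    (ha : ∀ x, G.Adj (l.head hne) x → x ∈ l) (hb : ∀ x, G.Adj (l.getLast hne) x → x ∈ l) :
    ∃ c : List V, c.Perm l ∧ Cycle.Chain G.Adj c := by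
  by_cases hab : G.Adj (l.head hne) (l.getLast hne)
  · exact ⟨l, .refl l, (Cycle.chain_ne_nil _ hne).2 (hl.cons_of_ne_nil hne hab.symm)⟩
  have hne' : l.head hne ≠ l.getLast hne := by
    rw [List.head_eq_getElem, List.getLast_eq_getElem, Ne, hnd.getElem_inj_iff]
    omega
  have := hG _ _ hne' hab
  exact exists_perm_cycleChain_of_length_le_degree_add_degree G hl hne ha hb (by omega)

theorem exists_nodup_isChain_length_succ_of_ore
    (hG : ∀ u v, u ≠ v → ¬G.Adj u v → Fintype.card V ≤ G.degree u + G.degree v + 1)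
    {l : List V} (hnd : l.Nodup) (hl : l.IsChain G.Adj) (hne : l ≠ [])
    (hcard : l.length < Fintype.card V) :
    ∃ l' : List V, l'.Nodup ∧ l'.IsChain G.Adj ∧ l'.length = l.length + 1 := by
  set a := l.head hne
  set b := l.getLast hne
  by_cases ha : ∀ x, G.Adj a x → x ∈ l
  swap
  · push Not at ha
    obtain ⟨x, hax, hx⟩ := ha
    exact ⟨x :: l, List.nodup_cons.2 ⟨hx, hnd⟩, hl.cons_of_ne_nil hne hax.symm, rfl⟩
  by_cases hb : ∀ x, G.Adj b x → x ∈ l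
  swap
  · push Not at hb
    obtain ⟨x, hbx, hx⟩ := hb
    refine ⟨l ++ [x], ?_, hl.append (.singleton x) (by simpa [List.getLast?_eq_some_getLast hne]),
      by simp⟩
    exact hnd.append (List.nodup_singleton x) (by simpa using hx)
  obtain ⟨u, hu⟩ : ∃ u, u ∉ l := by
    by_contra! h
    have := List.toFinset_card_le l
    rw [eq_univ_of_forall fun u => List.mem_toFinset.2 (h u), card_univ] at this
    omega
  obtain ⟨w, hw, huw⟩ := exists_mem_adj_of_ore G hG (List.head_mem hne) ha hu
  have hlen : 2 ≤ l.length := by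
    have hwa : w ≠ a := fun e => hu (ha u (e ▸ huw.symm))
    rw [← List.cons_head_tail hne] at hw
    have := List.length_pos_of_mem ((List.mem_cons.1 hw).resolve_left hwa)
    rw [List.length_tail] at this
    omega
  obtain ⟨c, hcl, hc⟩ := exists_perm_cycleChain_of_ore G hG hnd hl hne hlen hcard ha hb
  obtain ⟨c', hperm, hchain⟩ := hc.exists_isChain_cons (hcl.mem_iff.2 hw)
  have hperm := hperm.trans hcl
  refine ⟨u :: w :: c', ?_, hchain.cons_cons huw, by simp [← hperm.length_eq]⟩
  exact List.nodup_cons.2 ⟨fun h => hu (hperm.mem_iff.1 h), hperm.nodup_iff.2 hnd⟩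

theorem exists_nodup_isChain_length_of_ore
    (hG : ∀ u v, u ≠ v → ¬G.Adj u v → Fintype.card V ≤ G.degree u + G.degree v + 1)
    {k : ℕ} (hk : 1 ≤ k) (hkV : k ≤ Fintype.card V) :
    ∃ l : List V, l.Nodup ∧ l.IsChain G.Adj ∧ l.length = k := by
  induction k, hk using Nat.le_induction with
  | base =>
    obtain ⟨v⟩ : Nonempty V := Fintype.card_pos_iff.1 hkV
    exact ⟨[v], List.nodup_singleton v, .singleton v, rfl⟩
  | succ k hk ih =>
    obtain ⟨l, hnd, hl, rfl⟩ := ih (by omega)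
    exact exists_nodup_isChain_length_succ_of_ore G hG hnd hl (List.ne_nil_of_length_pos hk) hkV

theorem isTraceable_of_ore [Nonempty V]
    (hG : ∀ u v, u ≠ v → ¬G.Adj u v → Fintype.card V ≤ G.degree u + G.degree v + 1) :
    G.IsTraceable := by
  have hV := Fintype.card_pos (α := V)
  obtain ⟨l, hnd, hl, hlen⟩ := exists_nodup_isChain_length_of_ore G hG hV le_rfl
  exact G.isTraceable_of_nodup_of_isChain hnd hl (List.ne_nil_of_length_pos (by omega)) hlen

end SimpleGraph

theorem dirac_traceable (G : SimpleGraph V) [DecidableRel G.Adj]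
    (hn : 3 ≤ Fintype.card V)
    (hδ : ((Fintype.card V : ℝ) - 1) / 2 ≤ (G.minDegree : ℝ)) :
    G.IsTraceable := by
  have : Nonempty V := Fintype.card_pos_iff.1 (by omega)
  have hδ' : Fintype.card V ≤ 2 * G.minDegree + 1 := by
    have : (Fintype.card V : ℝ) ≤ 2 * G.minDegree + 1 := by linarith
    exact_mod_cast this
  refine G.isTraceable_of_ore fun u v _ _ => ?_
  have hu := G.minDegree_le_degree u
  have hv := G.minDegree_le_degree v
  omega
end

section
/- If G is a k-connected graph on n ≥ 3 vertices and α(G) ≤ k, then G is Hamiltonian. -/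
open SimpleGraph Finset Matrix

variable {V : Type*} [Fintype V] [DecidableEq V]

/-! Take a longest cycle `C` and suppose some vertex `x` lies off it. Let `A` be the set of
vertices of `C` having a neighbour in the component `H` of `G - C` that contains `x`. If the
successor (along `C`) of a vertex of `A` were in `A`, or if the successors of two vertices of `A`
were adjacent, a path through `H` would give a longer cycle. Hence the successors of `A` together
with `x` form an independent set of size `|A| + 1`. On the other hand `A` separates `H` from the
vertices of `C` outside `A`, of which there is at least one, so `|A| ≥ k` and `α(G) > k`.
A first cycle exists because every vertex has degree at least `2`. -/

namespace List

variable {α : Type*}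

theorem exists_isRotated_cons {l : List α} {a : α} (h : a ∈ l) : ∃ t, l ~r a :: t := by
  obtain ⟨s, t, rfl⟩ := append_of_mem h
  exact ⟨t ++ s, by simpa using isRotated_append (l := s) (l' := a :: t)⟩

variable [DecidableEq α]

/-- `List.next` made total by sending every `a ∉ l` to itself. -/
def nextOrSelf (l : List α) (a : α) : α := if h : a ∈ l then l.next a h else a

theorem nextOrSelf_mem {l : List α} {a : α} (h : a ∈ l) : l.nextOrSelf a ∈ l := by
  rw [nextOrSelf, dif_pos h]
  exact next_mem l a h

theorem nextOrSelf_injOn {l : List α} (hl : l.Nodup) : Set.InjOn l.nextOrSelf {a | a ∈ l} := by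
  intro a ha b hb hab
  simp only [nextOrSelf, dif_pos (show a ∈ l from ha), dif_pos (show b ∈ l from hb)] at hab
  rw [← prev_next l hl a ha, ← prev_next l hl b hb]
  congr 1

theorem IsRotated.nextOrSelf_eq {l l' : List α} (h : l ~r l') (hl : l.Nodup) :
    l.nextOrSelf = l'.nextOrSelf := by
  funext a
  by_cases ha : a ∈ l
  · rw [nextOrSelf, nextOrSelf, dif_pos ha, dif_pos (h.mem_iff.1 ha)]
    exact isRotated_next_eq h hl ha
  · rw [nextOrSelf, nextOrSelf, dif_neg ha, dif_neg (h.mem_iff.not.1 ha)]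

theorem nextOrSelf_eq_of_isRotated {l t : List α} {a b : α} (hl : l.Nodup)
    (h : l ~r a :: b :: t) : l.nextOrSelf a = b := by
  rw [h.nextOrSelf_eq hl, nextOrSelf, dif_pos mem_cons_self]
  exact next_cons_cons_eq t a b _

end List

namespace SimpleGraph

section Cycles

variable {α : Type*} {G : SimpleGraph α}

structure IsCycleList (G : SimpleGraph α) (l : List α) : Prop where
  three_le_length : 3 ≤ l.length
  nodup : l.Nodup
  chain : Cycle.Chain G.Adj (l : Cycle α)

theorem isCycleList_cons_iff {u : α} {t : List α} :
    IsCycleList G (u :: t) ↔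
      2 ≤ t.length ∧ (u :: t).Nodup ∧ (u :: (t ++ [u])).IsChain G.Adj := by
  rw [← Cycle.chain_coe_cons]
  exact ⟨fun ⟨h₁, h₂, h₃⟩ => ⟨by simpa using h₁, h₂, h₃⟩,
    fun ⟨h₁, h₂, h₃⟩ => ⟨by simpa using h₁, h₂, h₃⟩⟩

theorem IsCycleList.isRotated {l l' : List α} (hl : IsCycleList G l) (h : l ~r l') :
    IsCycleList G l' where
  three_le_length := h.perm.length_eq ▸ hl.three_le_length
  nodup := h.perm.nodup_iff.1 hl.nodup
  chain := Cycle.coe_eq_coe.2 h ▸ hl.chain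

theorem Walk.IsCycle.isCycleList_dropLast_support {u : α} {c : G.Walk u u} (hc : c.IsCycle) :
    IsCycleList G c.support.dropLast where
  three_le_length := by
    have := hc.three_le_length
    rw [List.length_dropLast, Walk.length_support]
    omega
  nodup := hc.nodup_dropLast_support
  chain := by
    cases c with
    | nil => exact absurd hc Walk.not_isCycle_nil
    | cons h p =>
      rw [Walk.support_cons, List.dropLast_cons_of_ne_nil p.support_ne_nil, Cycle.chain_coe_cons,
        Walk.dropLast_support_concat]
      exact (Walk.cons h p).isChain_adj_support

theorem IsCycleList.exists_isCycle {u : α} {t : List α} (hl : IsCycleList G (u :: t)) :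
    ∃ c : G.Walk u u, c.IsCycle ∧ c.support = u :: (t ++ [u]) := by
  obtain ⟨hlen, hnodup, hchain⟩ := isCycleList_cons_iff.1 hl
  obtain ⟨c, hsupp⟩ : ∃ c : G.Walk u u, c.support = u :: (t ++ [u]) :=
    ⟨(Walk.ofSupport _ (List.cons_ne_nil _ _) hchain).copy (by simp) (by simp),
      (Walk.support_copy _ _ _).trans (Walk.support_ofSupport _ _)⟩
  refine ⟨c, Walk.isCycle_iff_isPath_tail_and_le_length.2 ⟨.mk' ?_, ?_⟩, hsupp⟩
  · rw [Walk.support_tail_of_not_nil, hsupp, List.tail_cons]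
    · exact (List.perm_append_singleton _ _).nodup_iff.2 hnodup
    · rw [Walk.not_nil_iff_lt_length, ← Nat.add_lt_add_iff_right (k := 1),
        ← Walk.length_support, hsupp]
      simp
  · rw [← Nat.add_le_add_iff_right (n := 1), ← Walk.length_support, hsupp]
    simp only [List.length_cons, List.length_append]
    omega

theorem IsCycleList.isHamiltonian [Fintype α] [DecidableEq α] {l : List α} (hl : IsCycleList G l)
    (hall : ∀ v, v ∈ l) : G.IsHamiltonian := by
  obtain _ | ⟨u, t⟩ := l
  · exact absurd hl.three_le_length (by simp)
  obtain ⟨c, hc, hsupp⟩ := hl.exists_isCycle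
  refine fun _ => ⟨u, c, Walk.isHamiltonianCycle_iff_isCycle_and_length_eq.2 ⟨hc, ?_⟩⟩
  have huniv : (u :: t).toFinset = Finset.univ := Finset.eq_univ_of_forall (by simpa using hall)
  rw [← Finset.card_univ, ← huniv, List.toFinset_card_of_nodup hl.nodup,
    ← Nat.add_right_cancel_iff (n := 1), ← Walk.length_support, hsupp]
  simp

theorem exists_isCycleList_forall_length_le [Fintype α] (h : ∃ l, IsCycleList G l) :
    ∃ l, IsCycleList G l ∧ ∀ l', IsCycleList G l' → l'.length ≤ l.length := by
  have hfin : {n | ∃ l, IsCycleList G l ∧ l.length = n}.Finite :=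
    (Set.finite_le_nat (Fintype.card α)).subset fun _ ⟨l, hl, hn⟩ =>
      hn ▸ hl.nodup.length_le_card
  obtain ⟨l₀, hl₀⟩ := h
  obtain ⟨_, ⟨l, hl, rfl⟩, hmax⟩ := hfin.exists_maximal ⟨_, l₀, hl₀, rfl⟩
  exact ⟨l, hl, fun l' hl' => (le_total _ _).elim id (hmax ⟨l', hl', rfl⟩)⟩

theorem isCycleList_cons_append_support {u y w z : α} {t : List α} (p : G.Walk y w)
    (hp : p.IsPath) (huy : G.Adj u y) (hwz : G.Adj w z) (hchain : (z :: (t ++ [u])).IsChain G.Adj)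
    (hnodup : (u :: z :: t).Nodup) (hdisj : ∀ x ∈ p.support, x ∉ u :: z :: t) :
    IsCycleList G (u :: (p.support ++ z :: t)) := by
  refine isCycleList_cons_iff.2 ⟨?_, ?_, ?_⟩
  · have := List.length_pos_iff.2 p.support_ne_nil
    simp only [List.length_append, List.length_cons]
    omega
  · rw [List.perm_middle.symm.nodup_iff, List.nodup_append]
    exact ⟨hp.support_nodup, hnodup, fun a ha b hb hab => hdisj a ha (hab ▸ hb)⟩
  · have hdetour := (Walk.cons huy (p.concat hwz)).isChain_adj_support
    rw [Walk.support_cons, Walk.support_concat] at hdetour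
    simpa using List.IsChain.append_overlap (l₁ := u :: p.support) (l₂ := [z])
      (by simpa using hdetour) (by simpa using hchain) (List.cons_ne_nil _ _)

variable [DecidableEq α] {l : List α}

theorem IsCycleList.exists_isRotated_cons_nextOrSelf (hl : IsCycleList G l) {u : α}
    (hu : u ∈ l) : ∃ t, l ~r u :: l.nextOrSelf u :: t := by
  obtain ⟨_ | ⟨z, t⟩, hrot⟩ := List.exists_isRotated_cons hu
  · have := hrot.perm.length_eq ▸ hl.three_le_length
    simp at this
  · rw [List.nextOrSelf_eq_of_isRotated hl.nodup hrot]
    exact ⟨t, hrot⟩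

theorem IsCycleList.exists_longer_of_path_to_nextOrSelf (hl : IsCycleList G l) {u y w : α}
    (hu : u ∈ l) (p : G.Walk y w) (hp : p.IsPath) (hpl : ∀ x ∈ p.support, x ∉ l)
    (huy : G.Adj u y) (hw : G.Adj w (l.nextOrSelf u)) :
    ∃ l', IsCycleList G l' ∧ l.length < l'.length := by
  obtain ⟨t, hrot⟩ := hl.exists_isRotated_cons_nextOrSelf hu
  have hl' := isCycleList_cons_iff.1 (hl.isRotated hrot)
  refine ⟨_, isCycleList_cons_append_support p hp huy hw (List.IsChain.tail hl'.2.2 : _)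
    hl'.2.1 fun x hx => hrot.mem_iff.not.1 (hpl x hx), ?_⟩
  have := List.length_pos_iff.2 p.support_ne_nil
  rw [hrot.perm.length_eq]
  simp only [List.length_append, List.length_cons]
  omega

theorem IsCycleList.exists_longer_of_adj_nextOrSelf (hl : IsCycleList G l) {u v y w : α}
    (hu : u ∈ l) (hv : v ∈ l) (huv : u ≠ v) (hnext : G.Adj (l.nextOrSelf u) (l.nextOrSelf v))
    (p : G.Walk y w) (hp : p.IsPath) (hpl : ∀ x ∈ p.support, x ∉ l)
    (huy : G.Adj u y) (hwv : G.Adj w v) :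
    ∃ l', IsCycleList G l' ∧ l.length < l'.length := by
  by_cases hnu : l.nextOrSelf u = v
  · exact hl.exists_longer_of_path_to_nextOrSelf hu p hp hpl huy (hnu ▸ hwv)
  by_cases hnv : l.nextOrSelf v = u
  · exact hl.exists_longer_of_path_to_nextOrSelf hv p.reverse hp.reverse (by simpa using hpl)
      hwv.symm (hnv ▸ huy.symm)
  obtain ⟨t, hrot⟩ := hl.exists_isRotated_cons_nextOrSelf hu
  set d := l.nextOrSelf u
  obtain ⟨X, Y', rfl⟩ := List.append_of_mem (show v ∈ t by
    simpa [Ne.symm huv, Ne.symm hnu] using hrot.mem_iff.1 hv)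
  obtain ⟨c, Y, rfl⟩ : ∃ c Y, Y' = c :: Y := by
    obtain _ | ⟨c, Y⟩ := Y'
    · refine absurd (List.nextOrSelf_eq_of_isRotated (t := d :: X) hl.nodup (hrot.trans ?_)) hnv
      simpa using List.isRotated_append (l := u :: d :: X) (l' := [v])
    · exact ⟨c, Y, rfl⟩
  have hc : l.nextOrSelf v = c := List.nextOrSelf_eq_of_isRotated hl.nodup (hrot.trans
    (by simpa using List.isRotated_append (l := u :: d :: X) (l' := v :: c :: Y)))
  rw [hc] at hnext
  have hold := isCycleList_cons_iff.1 (hl.isRotated hrot)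
  obtain ⟨hdv, -, hcu⟩ :=
    List.isChain_append_cons_cons (l₁ := u :: d :: X) (l₂ := Y ++ [u]) |>.1
      (by simpa using hold.2.2)
  have hvd : (v :: X.reverse ++ [d]).IsChain G.Adj := by
    simpa using List.isChain_reverse.2 (hdv.tail.imp fun _ _ h => h.symm)
  have hchain : (v :: (X.reverse ++ d :: c :: Y ++ [u])).IsChain G.Adj := by
    simpa using List.isChain_append_cons_cons (l₁ := v :: X.reverse) |>.2 ⟨hvd, hnext, hcu⟩
  have hperm : (u :: v :: (X.reverse ++ d :: c :: Y)).Perm (u :: d :: (X ++ v :: c :: Y)) := by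
    rw [List.perm_iff_count]
    intro a
    simp only [List.count_cons, List.count_append, List.count_reverse]
    omega
  refine ⟨_, isCycleList_cons_append_support p hp huy hwv (by simpa using hchain)
    (hperm.nodup_iff.2 hold.2.1)
    fun x hx hx' => hpl x hx (hrot.mem_iff.2 (hperm.mem_iff.1 hx')), ?_⟩
  have := List.length_pos_iff.2 p.support_ne_nil
  rw [hrot.perm.length_eq]
  simp only [List.length_append, List.length_cons, List.length_reverse]
  omega

end Cycles

section ReachableAvoiding

variable {α : Type*} {G : SimpleGraph α}

/-- The vertices of the component of `G - s` containing `x` (empty if `x ∈ s`). -/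
def reachableAvoiding (G : SimpleGraph α) (s : Set α) (x : α) : Set α :=
  {y | ∃ p : G.Walk x y, ∀ w ∈ p.support, w ∉ s}

variable {s : Set α} {x y z : α}

theorem self_mem_reachableAvoiding (hx : x ∉ s) : x ∈ G.reachableAvoiding s x :=
  ⟨Walk.nil, by simpa using hx⟩

theorem notMem_of_mem_reachableAvoiding (hy : y ∈ G.reachableAvoiding s x) : y ∉ s :=
  let ⟨p, hp⟩ := hy
  hp y p.end_mem_support

theorem mem_reachableAvoiding_of_adj (hy : y ∈ G.reachableAvoiding s x) (hyz : G.Adj y z)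
    (hz : z ∉ s) : z ∈ G.reachableAvoiding s x := by
  obtain ⟨p, hp⟩ := hy
  refine ⟨p.concat hyz, fun w hw => ?_⟩
  rw [Walk.support_concat, List.mem_append, List.mem_singleton] at hw
  rcases hw with hw | rfl
  exacts [hp w hw, hz]

theorem exists_isPath_of_mem_reachableAvoiding [DecidableEq α]
    (hy : y ∈ G.reachableAvoiding s x) (hz : z ∈ G.reachableAvoiding s x) :
    ∃ p : G.Walk y z, p.IsPath ∧ ∀ w ∈ p.support, w ∉ s := by
  obtain ⟨py, hpy⟩ := hy
  obtain ⟨pz, hpz⟩ := hz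
  refine ⟨(py.reverse.append pz).bypass, Walk.bypass_isPath _, fun w hw => ?_⟩
  rcases (Walk.mem_support_append_iff _ _).1 (Walk.support_bypass_subset_support _ hw) with hw | hw
  exacts [hpy w (by simpa using hw), hpz w hw]

end ReachableAvoiding

theorem isIndependentSet_insert_image {α : Type*} {G : SimpleGraph α} [DecidableEq α]
    {f : α → α} {A : Finset α} {x : α} (hx : ∀ u ∈ A, ¬G.Adj x (f u))
    (hA : ∀ u ∈ A, ∀ v ∈ A, u ≠ v → ¬G.Adj (f u) (f v)) :
    G.IsIndependentSet (insert x (A.image f)) := by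
  simp only [IsIndependentSet, Finset.mem_insert, Finset.mem_image]
  rintro _ (rfl | ⟨u, hu, rfl⟩) _ (rfl | ⟨v, hv, rfl⟩) hadj
  · exact G.irrefl hadj
  · exact hx v hv hadj
  · exact hx u hu hadj.symm
  · obtain rfl | huv := eq_or_ne u v
    exacts [G.irrefl hadj, hA u hu v hv huv hadj]

section Connectivity

variable {α : Type*} [Fintype α] {G : SimpleGraph α} {k : ℕ}

theorem exists_ne_not_adj_of_degree_add_one_lt [DecidableEq α] [DecidableRel G.Adj] {v : α}
    (h : G.degree v + 1 < Fintype.card α) : ∃ w, w ≠ v ∧ ¬G.Adj v w := by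
  obtain ⟨w, hw⟩ := (Gᶜ.degree_pos_iff_exists_adj v).1 (by rw [degree_compl]; omega)
  exact ⟨w, hw.ne.symm, ((compl_adj G v w).1 hw).2⟩

theorem IsKConnected.le_card_of_separates (hk : G.IsKConnected k) {A : Finset α} {H : Set α}
    (hH : ∀ a ∈ H, ∀ b ∉ A, G.Adj a b → b ∈ H) {x w : α} (hx : x ∈ H) (hxA : x ∉ A)
    (hw : w ∉ H) (hwA : w ∉ A) : k ≤ A.card := by
  by_contra! hA
  have hreach := (reachable_iff_reflTransGen _ _).1
    ((hk.2 A hA).preconnected ⟨x, hxA⟩ ⟨w, hwA⟩)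
  suffices ∀ b, Relation.ReflTransGen (G.induce (A : Set α)ᶜ).Adj ⟨x, hxA⟩ b → (b : α) ∈ H
    from hw (this _ hreach)
  intro b hb
  induction hb with
  | refl => exact hx
  | @tail b c _ hbc ih => exact hH b ih c c.2 hbc

theorem IsKConnected.connected (hk : G.IsKConnected k) (hk₀ : 0 < k) : G.Connected := by
  have : Nonempty α := Fintype.card_pos_iff.1 (hk₀.trans hk.1)
  refine ⟨fun x w => by_contra fun hxw => ?_⟩
  have := hk.le_card_of_separates (A := ∅) (H := {y | G.Reachable x y})
    (fun _ ha _ _ hab => ha.trans hab.reachable) Reachable.rfl (Finset.notMem_empty x) hxw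
    (Finset.notMem_empty w)
  rw [Finset.card_empty] at this
  omega

theorem IsKConnected.le_degree [DecidableEq α] [DecidableRel G.Adj] (hk : G.IsKConnected k)
    (v : α) : k ≤ G.degree v := by
  by_contra! hdeg
  obtain ⟨w, hwv, hvw⟩ := exists_ne_not_adj_of_degree_add_one_lt (G := G) (v := v)
    (by have := hk.1; omega)
  have hclosed : ∀ a ∈ ({v} : Set α), ∀ b ∉ G.neighborFinset v, G.Adj a b → b = v := by
    rintro a rfl b hb hab
    exact absurd ((mem_neighborFinset _ _ _).2 hab) hb
  have := hk.le_card_of_separates hclosed rfl (by simp) hwv (by simpa)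
  rw [card_neighborFinset_eq_degree] at this
  omega

theorem Connected.exists_isCycle_of_two_le_degree [DecidableRel G.Adj] (hG : G.Connected)
    (hdeg : ∀ v, 2 ≤ G.degree v) : ∃ (v : α) (c : G.Walk v v), c.IsCycle := by
  obtain ⟨v⟩ := hG.nonempty
  obtain ⟨w, hvw⟩ := (G.degree_pos_iff_exists_adj v).1 (by have := hdeg v; omega)
  have : Nontrivial α := ⟨v, w, hvw.ne⟩
  by_contra! hacyc
  obtain ⟨u, hu⟩ := IsTree.exists_vert_degree_one_of_nontrivial ⟨hG, fun _ c => hacyc _ c⟩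
  have := hdeg u
  omega

theorem IsKConnected.two_le_degree [DecidableEq α] [DecidableRel G.Adj] (hk : G.IsKConnected k)
    (hn : 3 ≤ Fintype.card α) (hα : ∀ s : Finset α, G.IsIndependentSet s → s.card ≤ k) (v : α) :
    2 ≤ G.degree v := by
  by_contra! hdeg
  obtain ⟨w, hwv, hvw⟩ := exists_ne_not_adj_of_degree_add_one_lt (G := G) (v := v) (by omega)
  have hpair : G.IsIndependentSet {v, w} := by
    simp only [IsIndependentSet, Finset.mem_insert, Finset.mem_singleton]
    rintro a (rfl | rfl) b (rfl | rfl) hab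
    exacts [G.irrefl hab, hvw hab, hvw hab.symm, G.irrefl hab]
  have := hα _ hpair
  rw [Finset.card_pair hwv.symm] at this
  have := hk.le_degree v
  omega

theorem IsCycleList.forall_mem_of_length_maximal [DecidableEq α] {l : List α}
    (hk : G.IsKConnected k) (hα : ∀ s : Finset α, G.IsIndependentSet s → s.card ≤ k)
    (hl : IsCycleList G l) (hmax : ∀ l', IsCycleList G l' → l'.length ≤ l.length) (x : α) :
    x ∈ l := by
  by_contra hx
  classical
  set H := G.reachableAvoiding {v | v ∈ l} x
  set A := Finset.univ.filter fun u => u ∈ l ∧ ∃ y ∈ H, G.Adj u y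
  have mem_A {u : α} : u ∈ A ↔ u ∈ l ∧ ∃ y ∈ H, G.Adj u y := by simp [A]
  have hnext : ∀ u ∈ A, l.nextOrSelf u ∉ A := by
    intro u hu hnu
    obtain ⟨hul, y, hy, huy⟩ := mem_A.1 hu
    obtain ⟨-, w, hw, hwn⟩ := mem_A.1 hnu
    obtain ⟨p, hp, hpl⟩ := exists_isPath_of_mem_reachableAvoiding hy hw
    obtain ⟨l', hl', hlt⟩ := hl.exists_longer_of_path_to_nextOrSelf hul p hp hpl huy hwn.symm
    exact (hmax l' hl').not_gt hlt
  have hnext_adj : ∀ u ∈ A, ∀ v ∈ A, u ≠ v → ¬G.Adj (l.nextOrSelf u) (l.nextOrSelf v) := by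
    intro u hu v hv huv hadj
    obtain ⟨hul, y, hy, huy⟩ := mem_A.1 hu
    obtain ⟨hvl, w, hw, hvw⟩ := mem_A.1 hv
    obtain ⟨p, hp, hpl⟩ := exists_isPath_of_mem_reachableAvoiding hy hw
    obtain ⟨l', hl', hlt⟩ :=
      hl.exists_longer_of_adj_nextOrSelf hul hvl huv hadj p hp hpl huy hvw.symm
    exact (hmax l' hl').not_gt hlt
  have hx_adj : ∀ u ∈ A, ¬G.Adj x (l.nextOrSelf u) := fun u hu hadj => hnext u hu <|
    mem_A.2 ⟨List.nextOrSelf_mem (mem_A.1 hu).1, x, self_mem_reachableAvoiding hx, hadj.symm⟩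
  have hcard : k ≤ A.card := by
    obtain ⟨w, hwl, hwA⟩ : ∃ w ∈ l, w ∉ A := by
      obtain ⟨u, hu⟩ := List.exists_mem_of_length_pos (l := l) (by
        have := hl.three_le_length; omega)
      by_cases huA : u ∈ A
      exacts [⟨_, List.nextOrSelf_mem hu, hnext u huA⟩, ⟨u, hu, huA⟩]
    refine hk.le_card_of_separates (H := H) (fun a ha b hb hab => ?_)
      (self_mem_reachableAvoiding hx) (fun hxA => hx (mem_A.1 hxA).1)
      (fun hw => notMem_of_mem_reachableAvoiding hw hwl) hwA
    by_cases hbl : b ∈ l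
    · exact absurd (mem_A.2 ⟨hbl, a, ha, hab.symm⟩) hb
    · exact mem_reachableAvoiding_of_adj ha hab hbl
  have := hα _ (isIndependentSet_insert_image hx_adj hnext_adj)
  rw [Finset.card_insert_of_notMem, Finset.card_image_of_injOn] at this
  · omega
  · exact (List.nextOrSelf_injOn hl.nodup).mono fun u hu => (mem_A.1 hu).1
  · simp only [Finset.mem_image, not_exists, not_and]
    exact fun u hu hux => hx (hux ▸ List.nextOrSelf_mem (mem_A.1 hu).1)

end Connectivity

end SimpleGraph

theorem chvatal_erdos_hamiltonian (G : SimpleGraph V) (k : ℕ)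
    (hn : 3 ≤ Fintype.card V) (hk : G.IsKConnected k)
    (hα : ∀ s : Finset V, G.IsIndependentSet s → s.card ≤ k) :
    G.IsHamiltonian := by
  classical
  obtain ⟨v⟩ : Nonempty V := Fintype.card_pos_iff.1 (by omega)
  have hk₀ : 0 < k := hα {v} (by simp [IsIndependentSet])
  obtain ⟨u, c, hc⟩ :=
    (hk.connected hk₀).exists_isCycle_of_two_le_degree (hk.two_le_degree hn hα)
  obtain ⟨l, hl, hmax⟩ :=
    exists_isCycleList_forall_length_le ⟨_, hc.isCycleList_dropLast_support⟩
  exact hl.isHamiltonian (hl.forall_mem_of_length_maximal hk hα hmax)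
end

section
/- Let G be a k-connected graph of order n ≥ 3 with minimum degree δ. If λ₁(K₁ ∇ G) ≤ (δ+1)·√((k+1)/(n−k)), then G is homogeneously traceable. -/
/-!
The all-ones vector in the Rayleigh quotient bounds `λ₁(K₁ ∇ G)` below by the average degree
of `K₁ ∇ G`, which is at least `n (δ + 2) / (n + 1) ≥ δ + 1`. The hypothesis then forces
`(k + 1) / (n - k) ≥ 1`, i.e. `n ≤ 2k + 1`. Since `k ≤ δ`, this gives Dirac's condition
`n ≤ 2δ`, except when `n = 2k + 1`; there the bound reads `λ₁ ≤ δ + 1`, so `n ≤ δ + 1`.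

Under `n ≤ 2δ` the vertices of a longest path `a … b` carry a cycle: all neighbours of `a` and
`b` lie on the path, so by pigeonhole some consecutive `x y` on it have `x ~ b` and `y ~ a`,
and `a … x b … y a` is a cycle. A vertex off this cycle would have a neighbour on it (closed
neighbourhoods of size `> n / 2` meet), giving a longer path; so the cycle is Hamiltonian, and
cutting it open at any vertex gives a Hamiltonian path starting there.
-/

open SimpleGraph Finset Matrix

variable {V : Type*} [Fintype V] [DecidableEq V]

instance (G : SimpleGraph V) [DecidableRel G.Adj] :
    DecidableRel (joinK1 G).Adj := fun a b =>
  match a, b with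
  | none, none => isFalse (fun h => h)
  | none, some _ => isTrue trivial
  | some _, none => isTrue trivial
  | some u, some v => inferInstanceAs (Decidable (G.Adj u v))


theorem Matrix.IsHermitian.dotProduct_mulVec_le_iSup_eigenvalues {ι : Type*} [Fintype ι]
    [DecidableEq ι] {A : Matrix ι ι ℝ} (hA : A.IsHermitian) (x : ι → ℝ) :
    x ⬝ᵥ A *ᵥ x ≤ (⨆ i, hA.eigenvalues i) * (x ⬝ᵥ x) := by
  set c := ⨆ i, hA.eigenvalues i
  have hpsd : (algebraMap ℝ (Matrix ι ι ℝ) c - A).PosSemidef := by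
    rw [posSemidef_iff_isHermitian_and_spectrum_nonneg, ← spectrum.singleton_sub_eq,
      hA.spectrum_real_eq_range_eigenvalues]
    refine ⟨(isHermitian_diagonal_of_self_adjoint _ (by simp [IsSelfAdjoint])).sub hA, ?_⟩
    rintro _ ⟨_, rfl, _, ⟨i, rfl⟩, rfl⟩
    exact sub_nonneg.2 (le_ciSup (Set.finite_range hA.eigenvalues).bddAbove i)
  have := hpsd.dotProduct_mulVec_nonneg x
  rw [sub_mulVec, dotProduct_sub, Algebra.algebraMap_eq_smul_one, smul_mulVec, one_mulVec,
    dotProduct_smul, smul_eq_mul] at this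
  simpa using this

namespace List

variable {α : Type*} {r : α → α → Prop}

theorem exists_eq_append_cons_cons_of_length_tail_lt [DecidableEq α] {l : List α}
    {A B : Finset α} (hA : ∀ y ∈ A, y ∈ l.tail) (hB : ∀ x ∈ B, x ∈ l.dropLast)
    (hlen : l.tail.length < #A + #B) :
    ∃ p q x y, l = p ++ x :: y :: q ∧ x ∈ B ∧ y ∈ A := by
  induction l generalizing A B with
  | nil => simp_all [Finset.nonempty_iff_ne_empty, eq_empty_iff_forall_notMem]
  | cons z l ih =>
    cases l with
    | nil => simp_all [Finset.nonempty_iff_ne_empty, eq_empty_iff_forall_notMem]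
    | cons y l =>
      by_cases hzy : z ∈ B ∧ y ∈ A
      · exact ⟨[], l, z, y, rfl, hzy⟩
      obtain ⟨p, q, x, y', h, hx, hy⟩ := ih (A := A.erase y) (B := B.erase z)
        (fun w hw => by simpa [(mem_erase.1 hw).1] using hA w (mem_erase.1 hw).2)
        (fun w hw => by
          simpa [dropLast_cons_cons, (mem_erase.1 hw).1] using hB w (mem_erase.1 hw).2)
        (by
          -- as `z ∈ B ∧ y ∈ A` fails, erasing drops `#A + #B` by at most one
          have := Finset.pred_card_le_card_erase (s := A) (a := y)
          have := Finset.pred_card_le_card_erase (s := B) (a := z)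
          by_cases hy : y ∈ A <;> by_cases hz : z ∈ B <;>
            simp_all [card_erase_of_mem, erase_eq_of_notMem] <;> omega)
      exact ⟨z :: p, q, x, y', by rw [h]; rfl, Finset.mem_of_mem_erase hx,
        Finset.mem_of_mem_erase hy⟩

theorem IsChain.cycleChain_append_cons_reverse [Std.Symm r] {p q : List α} {x y : α}
    (h : IsChain r (p ++ x :: y :: q)) (hy : r y ((p ++ [x]).head (by simp)))
    (hx : r x ((y :: q).getLast (by simp))) :
    Cycle.Chain r ↑(p ++ x :: (y :: q).reverse) := by
  have hpx : IsChain r (p ++ [x]) := h.infix ⟨[], y :: q, by simp⟩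
  have hyq : IsChain r (y :: q).reverse := by
    rw [isChain_reverse]
    exact (h.infix ⟨p ++ [x], [], by simp⟩).imp fun _ _ => Std.Symm.symm _ _
  have : IsChain r (y :: (p ++ [x] ++ (y :: q).reverse)) := by
    rw [← cons_append, isChain_append]
    refine ⟨hpx.cons_of_ne_nil (by simp) hy, hyq, fun a ha b hb => ?_⟩
    rw [← cons_append, getLast?_concat, Option.mem_some_iff] at ha
    rw [head?_reverse, getLast?_eq_some_getLast (cons_ne_nil y q), Option.mem_some_iff] at hb
    exact ha ▸ hb ▸ hx
  rw [Cycle.chain_ne_nil _ (by simp)]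
  simpa using this

end List

theorem Cycle.Chain.exists_isRotated_isChain_cons {α : Type*} {r : α → α → Prop}
    {l : List α} (h : Cycle.Chain r (l : Cycle α)) {w : α} (hw : w ∈ l) :
    ∃ t, (w :: t) ~r l ∧ List.IsChain r (w :: t) := by
  obtain ⟨s, t, rfl⟩ := List.append_of_mem hw
  have hrot : (w :: (t ++ s)) ~r (s ++ w :: t) := by
    simpa using (List.isRotated_append (l := s) (l' := w :: t)).symm
  rw [← Cycle.coe_eq_coe.2 hrot, Cycle.chain_coe_cons, ← List.cons_append] at h
  exact ⟨t ++ s, hrot, h.left_of_append⟩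

namespace SimpleGraph

variable {α : Type*} (G : SimpleGraph α)

structure IsLongestPathList (l : List α) : Prop where
  isChain : l.IsChain G.Adj
  nodup : l.Nodup
  length_le : ∀ l' : List α, l'.IsChain G.Adj → l'.Nodup → l'.length ≤ l.length

theorem exists_isLongestPathList [Fintype α] : ∃ l, G.IsLongestPathList l := by
  obtain ⟨l, ⟨hc, hnd⟩, hmax⟩ :=
    Set.exists_max_image {l : List α | l.IsChain G.Adj ∧ l.Nodup} List.length
      ((List.finite_length_le α (Fintype.card α)).subset fun _ h => h.2.length_le_card)
      ⟨[], List.isChain_nil, List.nodup_nil⟩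
  exact ⟨l, hc, hnd, fun l' hc' hnd' => hmax l' ⟨hc', hnd'⟩⟩

namespace IsLongestPathList

variable {G} {l : List α}

theorem reverse (hl : G.IsLongestPathList l) : G.IsLongestPathList l.reverse where
  isChain := List.isChain_reverse.2 (hl.isChain.imp fun _ _ h => h.symm)
  nodup := List.nodup_reverse.2 hl.nodup
  length_le l' hc hnd := l.length_reverse ▸ hl.length_le l' hc hnd

theorem ne_nil [Nonempty α] (hl : G.IsLongestPathList l) : l ≠ [] := by
  rintro rfl
  simpa using hl.length_le [Classical.arbitrary α] (List.isChain_singleton _)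
    (List.nodup_singleton _)

theorem mem_of_adj_head {a w : α} {t : List α} (hl : G.IsLongestPathList (a :: t))
    (h : G.Adj a w) : w ∈ t := by
  by_contra hwt
  have := hl.length_le (w :: a :: t) (hl.isChain.cons_cons h.symm)
    (List.nodup_cons.2 ⟨by simp [h.ne', hwt], hl.nodup⟩)
  simp at this

theorem mem_dropLast_of_adj {b w : α} (hl : G.IsLongestPathList l) (hb : l.getLast? = some b)
    (h : G.Adj b w) : w ∈ l.dropLast := by
  have hrev : l.reverse = b :: l.dropLast.reverse := by
    conv_lhs => rw [← List.dropLast_append_getLast? b hb]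
    simp
  exact List.mem_reverse.1 ((hrev ▸ hl.reverse).mem_of_adj_head h)

theorem exists_perm_cycleChain [Fintype α] [DecidableEq α] [DecidableRel G.Adj] {a b : α}
    (hl : G.IsLongestPathList l) (ha : l.head? = some a) (hb : l.getLast? = some b)
    (hdeg : l.length ≤ G.degree a + G.degree b) :
    ∃ c : List α, c.Perm l ∧ Cycle.Chain G.Adj c := by
  obtain ⟨t, rfl⟩ : ∃ t, l = a :: t := by cases l <;> simp_all
  obtain ⟨p, q, x, y, hsplit, hx, hy⟩ := List.exists_eq_append_cons_cons_of_length_tail_lt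
    (l := a :: t) (A := G.neighborFinset a) (B := G.neighborFinset b)
    (fun y hy => hl.mem_of_adj_head ((G.mem_neighborFinset _ _).1 hy))
    (fun x hx => hl.mem_dropLast_of_adj hb ((G.mem_neighborFinset _ _).1 hx))
    (by simp only [card_neighborFinset_eq_degree, List.tail_cons, List.length_cons] at hdeg ⊢
        omega)
  refine ⟨p ++ x :: (y :: q).reverse,
    hsplit ▸ ((List.reverse_perm _).cons x).append_left p, ?_⟩
  have := G.symm
  refine (hsplit ▸ hl.isChain).cycleChain_append_cons_reverse ?_ ?_
  · have hhead : (p ++ [x]).head (by simp) = a := by cases p <;> simp_all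
    exact hhead ▸ ((G.mem_neighborFinset _ _).1 hy).symm
  · have hlast : (y :: q).getLast (by simp) = b := by
      rw [hsplit, List.getLast?_append_of_ne_nil _ (by simp)] at hb
      simpa [List.getLast?_eq_some_getLast] using hb
    exact hlast ▸ ((G.mem_neighborFinset _ _).1 hx).symm

end IsLongestPathList

theorem isHomogeneouslyTraceable_of_cycleChain [DecidableEq α] {c : List α} (hnd : c.Nodup)
    (hmem : ∀ v, v ∈ c) (hc : Cycle.Chain G.Adj c) : G.IsHomogeneouslyTraceable := by
  intro u
  obtain ⟨t, hrot, hchain⟩ := hc.exists_isRotated_isChain_cons (hmem u)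
  obtain ⟨v, p, hp⟩ : ∃ v, ∃ p : G.Walk u v, p.support = u :: t :=
    ⟨_, Walk.ofSupport (u :: t) (List.cons_ne_nil _ _) hchain, Walk.support_ofSupport _ _⟩
  refine ⟨v, p, Walk.IsPath.isHamiltonian_of_mem ?_ fun w => ?_⟩
  · exact Walk.IsPath.mk' (hp ▸ hrot.perm.nodup_iff.2 hnd)
  · exact hp ▸ hrot.perm.mem_iff.2 (hmem w)

variable [Fintype α] [DecidableEq α] [DecidableRel G.Adj]

theorem not_disjoint_insert_neighborFinset (h : Fintype.card α ≤ 2 * G.minDegree) (u v : α) :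
    ¬ Disjoint (insert u (G.neighborFinset u)) (insert v (G.neighborFinset v)) := by
  intro hdisj
  have := card_le_univ (insert u (G.neighborFinset u) ∪ insert v (G.neighborFinset v))
  rw [card_union_of_disjoint hdisj, card_insert_of_notMem (G.notMem_neighborFinset_self u),
    card_insert_of_notMem (G.notMem_neighborFinset_self v), card_neighborFinset_eq_degree,
    card_neighborFinset_eq_degree] at this
  have := G.minDegree_le_degree u
  have := G.minDegree_le_degree v
  omega

theorem exists_cycleChain_of_card_le_two_mul_minDegree [Nonempty α]
    (h : Fintype.card α ≤ 2 * G.minDegree) :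
    ∃ c : List α, c.Nodup ∧ (∀ v, v ∈ c) ∧ Cycle.Chain G.Adj c := by
  obtain ⟨l, hl⟩ := G.exists_isLongestPathList
  obtain ⟨a, t, rfl⟩ := List.exists_cons_of_ne_nil hl.ne_nil
  set b := (a :: t).getLast (List.cons_ne_nil a t)
  obtain ⟨c, hcl, hc⟩ :=
    hl.exists_perm_cycleChain (b := b) rfl (List.getLast?_eq_some_getLast _) (by
      have := hl.nodup.length_le_card
      have := G.minDegree_le_degree a
      have := G.minDegree_le_degree b
      omega)
  have hcnd : c.Nodup := hcl.nodup_iff.2 hl.nodup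
  refine ⟨c, hcnd, fun v => by_contra fun hv => ?_, hc⟩
  obtain ⟨w, hwa, hwv⟩ := not_disjoint_iff.1 (G.not_disjoint_insert_neighborFinset h a v)
  have hwc : w ∈ c := by
    rw [hcl.mem_iff]
    rcases mem_insert.1 hwa with rfl | hwa
    · exact List.mem_cons_self
    · exact List.mem_cons_of_mem _ (hl.mem_of_adj_head ((G.mem_neighborFinset _ _).1 hwa))
  have hvw : G.Adj v w := by
    rcases mem_insert.1 hwv with rfl | hwv
    · exact absurd hwc hv
    · exact (G.mem_neighborFinset _ _).1 hwv
  obtain ⟨s, hrot, hchain⟩ := hc.exists_isRotated_isChain_cons hwc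
  have := hl.length_le (v :: w :: s) (hchain.cons_cons hvw)
    (List.nodup_cons.2 ⟨fun h => hv (hrot.perm.mem_iff.1 h), hrot.perm.nodup_iff.2 hcnd⟩)
  rw [List.length_cons, hrot.perm.length_eq, hcl.length_eq] at this
  omega

theorem isHomogeneouslyTraceable_of_card_le_two_mul_minDegree
    (h : Fintype.card α ≤ 2 * G.minDegree) : G.IsHomogeneouslyTraceable := by
  cases isEmpty_or_nonempty α
  · exact isEmptyElim
  · obtain ⟨c, hnd, hmem, hc⟩ := G.exists_cycleChain_of_card_le_two_mul_minDegree h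
    exact G.isHomogeneouslyTraceable_of_cycleChain hnd hmem hc

theorem sum_degree_le_adjSpecRad_mul_card :
    ∑ v, (G.degree v : ℝ) ≤ adjSpecRad G * Fintype.card α := by
  simpa [adjSpecRad, dotProduct, adjMatrix_mulVec_const_apply] using
    (adjHerm G).dotProduct_mulVec_le_iSup_eigenvalues (fun _ => 1)

variable {G} in
theorem IsKConnected.le_minDegree {k : ℕ} (hk : G.IsKConnected k) : k ≤ G.minDegree := by
  by_contra! hδk
  have : Nonempty α := Fintype.card_pos_iff.1 (by have := hk.1; omega)
  obtain ⟨v, hv⟩ := G.exists_minimal_degree_vertex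
  set S := G.neighborFinset v
  have hS : S.card < k := by rwa [card_neighborFinset_eq_degree, ← hv]
  have : Nontrivial ↥((S : Set α)ᶜ) := by
    rw [← Fintype.one_lt_card_iff_nontrivial, Fintype.card_compl_set]
    simp only [Finset.coe_sort_coe, Fintype.card_coe]
    have := hk.1
    omega
  obtain ⟨u, hu⟩ := (hk.2 S hS).preconnected.exists_adj_of_nontrivial ⟨v, by simp [S]⟩
  exact u.2 ((G.mem_neighborFinset v u).2 hu)

end SimpleGraph

section joinK1

variable {α : Type*} [Fintype α] (G : SimpleGraph α) [DecidableRel G.Adj]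

theorem degree_joinK1_none : (joinK1 G).degree none = Fintype.card α := by
  rw [← card_neighborFinset_eq_degree, show (joinK1 G).neighborFinset none = univ.map .some by
    ext (_ | _) <;> simp only [mem_neighborFinset] <;> simp [joinK1]]
  simp

theorem degree_joinK1_some (v : α) : (joinK1 G).degree (some v) = G.degree v + 1 := by
  rw [← card_neighborFinset_eq_degree, ← card_neighborFinset_eq_degree,
    show (joinK1 G).neighborFinset (some v) = cons none ((G.neighborFinset v).map .some) (by simp)
      by ext (_ | _) <;> simp only [mem_neighborFinset] <;> simp [joinK1]]
  simp

variable [DecidableEq α]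

theorem card_mul_minDegree_add_two_le_adjSpecRad_joinK1 :
    (Fintype.card α : ℝ) * (G.minDegree + 2) ≤ adjSpecRad (joinK1 G) * (Fintype.card α + 1) :=
  calc (Fintype.card α : ℝ) * (G.minDegree + 2)
      = Fintype.card α + ∑ _v : α, ((G.minDegree : ℝ) + 1) := by simp; ring
    _ ≤ Fintype.card α + ∑ v, ((G.degree v : ℝ) + 1) := by
        gcongr with v
        exact_mod_cast G.minDegree_le_degree v
    _ = ∑ w, ((joinK1 G).degree w : ℝ) := by
        simp [Fintype.sum_option, degree_joinK1_none, degree_joinK1_some]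
    _ ≤ adjSpecRad (joinK1 G) * (Fintype.card α + 1) := by
        simpa using (joinK1 G).sum_degree_le_adjSpecRad_mul_card

theorem card_le_two_mul_minDegree_of_adjSpecRad_joinK1_le {k : ℕ} (hn : 2 ≤ Fintype.card α)
    (hk : G.IsKConnected k)
    (hlam : adjSpecRad (joinK1 G) ≤
      ((G.minDegree : ℝ) + 1) * Real.sqrt (((k : ℝ) + 1) / ((Fintype.card α : ℝ) - k))) :
    Fintype.card α ≤ 2 * G.minDegree := by
  have : Nonempty α := Fintype.card_pos_iff.1 (by omega)
  set n := Fintype.card α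
  set δ := G.minDegree
  have hjoin := card_mul_minDegree_add_two_le_adjSpecRad_joinK1 G
  have hδn : (δ : ℝ) + 1 ≤ n := by exact_mod_cast G.minDegree_lt_card
  have hkn : (k : ℝ) < n := by exact_mod_cast hk.1
  have hδ_le_lam : (δ : ℝ) + 1 ≤ adjSpecRad (joinK1 G) := by nlinarith
  have hratio : 1 ≤ ((k : ℝ) + 1) / (n - k) := by
    rw [← Real.one_le_sqrt]
    nlinarith
  rw [one_le_div (by linarith)] at hratio
  have hkδ := hk.le_minDegree
  have hnk : n ≤ 2 * k + 1 := by exact_mod_cast (show (n : ℝ) ≤ 2 * k + 1 by linarith)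
  rcases (by omega : n ≤ 2 * k ∨ n = 2 * k + 1) with h | h
  · omega
  · have hsqrt : Real.sqrt (((k : ℝ) + 1) / (n - k)) = 1 := by
      rw [h, Nat.cast_add, Nat.cast_mul, Nat.cast_ofNat, Nat.cast_one,
        show 2 * (k : ℝ) + 1 - k = k + 1 by ring, div_self (by positivity), Real.sqrt_one]
    rw [hsqrt, mul_one] at hlam
    have : (n : ℝ) ≤ δ + 1 := by nlinarith
    norm_cast at this
    omega

end joinK1

theorem spectral_homogeneously_traceable (G : SimpleGraph V) [DecidableRel G.Adj] (k : ℕ)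
    (hn : 3 ≤ Fintype.card V) (hk : G.IsKConnected k)
    (hlam : adjSpecRad (joinK1 G) ≤
      ((G.minDegree : ℝ) + 1) * Real.sqrt (((k : ℝ) + 1) / ((Fintype.card V : ℝ) - k))) :
    G.IsHomogeneouslyTraceable :=
  G.isHomogeneouslyTraceable_of_card_le_two_mul_minDegree
    (card_le_two_mul_minDegree_of_adjSpecRad_joinK1_le G (by omega) hk hlam)
end

section
/- Let G be a k-connected graph of order n ≥ 3 with minimum degree δ and Laplacian spectral radius μ₁(G). If μ₁(G) < nδ/(n−k), then G is Hamiltonian-connected. -/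
open SimpleGraph Finset Matrix

variable {V : Type*} [Fintype V] [DecidableEq V]

/-!
If a longest `u`–`v` path `L` misses a vertex `w`, let `R` be the component of `w` in `G - L`
and `N` the vertices of `L` with a neighbour in `R`. Since `N` separates `R` from the rest of `L`,
`k`-connectivity gives `|N| ≥ k`. Maximality of `L` forbids two consecutive vertices of `N`, an
edge from `w` to the successor of a vertex of `N`, and an edge between the successors of two
vertices of `N`: each would let `L` make a detour through `R`. So `w` and the successors of
`N \ {v}` form an independent set of size at least `k` (Chvátal–Erdős).

The spectral hypothesis excludes such a set: for an independent set `S` with `s` vertices, the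
Rayleigh quotient of the Laplacian at `1_S - s/n` is `n ∑_{i ∈ S} dᵢ / (s (n - s))`, because `S`
spans no edge. Hence `n δ ≤ μ₁ (n - s)`, and `μ₁ < n δ / (n - k)` forces `s < k`.
-/

theorem List.exists_eq_append_of_infix_pair {α : Type*} {l : List α} {a b c d : α}
    (h₁ : [a, b] <:+: l) (h₂ : [c, d] <:+: l) (hac : a ≠ c) (hbc : b ≠ c) (hda : d ≠ a) :
    ∃ A B C, l = A ++ a :: b :: (B ++ c :: d :: C) ∨ l = A ++ c :: d :: (B ++ a :: b :: C) := by
  obtain ⟨s₁, t₁, rfl⟩ := h₁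
  obtain ⟨s₂, t₂, h⟩ := h₂
  simp only [List.append_assoc, List.cons_append, List.nil_append] at h ⊢
  rcases List.append_eq_append_iff.mp h with ⟨m, rfl, hm⟩ | ⟨m, rfl, hm⟩
  · rcases m with _ | ⟨x, _ | ⟨x', B⟩⟩
    · simp_all
    · simp_all
    · exact ⟨s₂, B, t₁, Or.inr (by simp_all)⟩
  · rcases m with _ | ⟨x, _ | ⟨x', B⟩⟩
    · simp_all
    · simp_all
    · exact ⟨s₁, B, t₂, Or.inl (by simp_all)⟩

theorem List.Nodup.injOn_nextOr {α : Type*} [DecidableEq α] {l : List α} (hl : l.Nodup) :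
    Set.InjOn (fun y ↦ l.nextOr y y) {y | y ∈ l.dropLast} := by
  intro y₁ h₁ y₂ h₂ h
  simp only [List.nextOr_eq_getElem_idxOf_succ_of_mem_dropLast h₁,
    List.nextOr_eq_getElem_idxOf_succ_of_mem_dropLast h₂, hl.getElem_inj_iff,
    Nat.add_right_cancel_iff] at h
  exact (List.idxOf_inj (List.mem_of_mem_dropLast h₁)).mp h

theorem Matrix.IsHermitian.dotProduct_mulVec_le_iSup_eigenvalues_mul {n : Type*} [Fintype n]
    [DecidableEq n] {A : Matrix n n ℝ} (hA : A.IsHermitian) (x : n → ℝ) :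
    x ⬝ᵥ (A *ᵥ x) ≤ (⨆ i, hA.eigenvalues i) * (x ⬝ᵥ x) := by
  set μ := ⨆ i, hA.eigenvalues i
  have hgap : μ • 1 - A = Unitary.conjStarAlgAut ℝ _ hA.eigenvectorUnitary
      (diagonal fun i ↦ μ - hA.eigenvalues i) := by
    rw [show diagonal (fun i ↦ μ - hA.eigenvalues i) =
        μ • 1 - diagonal (RCLike.ofReal ∘ hA.eigenvalues) by
          ext i j; by_cases h : i = j <;> simp [h, diagonal],
      map_sub, map_smul, map_one, ← hA.spectral_theorem]
  have hpsd : (μ • 1 - A).PosSemidef := by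
    rw [hgap, Unitary.conjStarAlgAut_apply, star_eq_conjTranspose]
    refine PosSemidef.mul_mul_conjTranspose_same (posSemidef_diagonal_iff.mpr fun i ↦ ?_) _
    exact sub_nonneg.mpr (le_ciSup (Set.finite_range _).bddAbove i)
  have := hpsd.dotProduct_mulVec_nonneg x
  rw [star_trivial, sub_mulVec, dotProduct_sub, smul_mulVec, one_mulVec, dotProduct_smul,
    smul_eq_mul] at this
  linarith

namespace SimpleGraph

section PathList

variable {V : Type*} {G : SimpleGraph V} {u v w x y : V} {s : Set V}

structure IsPathList (G : SimpleGraph V) (u v : V) (l : List V) : Prop where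
  isChain : l.IsChain G.Adj
  nodup : l.Nodup
  head?_eq : l.head? = some u
  getLast?_eq : l.getLast? = some v

structure IsLongestPathList_s13 (G : SimpleGraph V) (u v : V) (l : List V) : Prop
    extends G.IsPathList u v l where
  length_le : ∀ l', G.IsPathList u v l' → l'.length ≤ l.length

theorem Walk.IsPath.isPathList_support {p : G.Walk u v} (hp : p.IsPath) :
    G.IsPathList u v p.support :=
  ⟨p.isChain_adj_support, hp.support_nodup, by cases p <;> simp,
    by rw [List.getLast?_eq_some_getLast (by simp), p.getLast_support]⟩

theorem IsPathList.exists_isHamiltonian [DecidableEq V] {l : List V} (hl : G.IsPathList u v l)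
    (hmem : ∀ a, a ∈ l) : ∃ p : G.Walk u v, p.IsHamiltonian := by
  have hne : l ≠ [] := List.ne_nil_of_mem (hmem u)
  refine ⟨(Walk.ofSupport l hne hl.isChain).copy ?_ ?_, fun a ↦ ?_⟩
  · simpa [List.head?_eq_some_head hne] using hl.head?_eq
  · simpa [List.getLast?_eq_some_getLast hne] using hl.getLast?_eq
  · simpa using List.count_eq_one_of_mem hl.nodup (hmem a)

theorem Reachable.exists_isLongestPathList [Fintype V] (h : G.Reachable u v) :
    ∃ l, G.IsLongestPathList_s13 u v l := by
  classical
  obtain ⟨p⟩ := h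
  let P m := ∃ l, G.IsPathList u v l ∧ l.length = m
  have hbound {l} (hl : G.IsPathList u v l) : l.length ≤ Fintype.card V :=
    hl.nodup.length_le_card
  have hp := p.toPath.2.isPathList_support
  obtain ⟨l, hl, hlen⟩ : P (Nat.findGreatest P (Fintype.card V)) :=
    Nat.findGreatest_spec (hbound hp) ⟨_, hp, rfl⟩
  exact ⟨l, hl, fun l' hl' ↦ hlen ▸ Nat.le_findGreatest (hbound hl') ⟨l', hl', rfl⟩⟩

/-- A longest path `L = A ++ y :: (P ++ C)` cannot be rerouted as
`A ++ y :: (Q ++ (P.reverse ++ C))` through a path `Q` off `L`; `hC` makes sure that the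
rerouted path still ends at `v`. -/
theorem IsLongestPathList_s13.false_of_detour {x₁ x₂ : V} {L A P C Q : List V}
    (hL : G.IsLongestPathList_s13 u v L) (hdec : L = A ++ y :: (P ++ C)) (hP : P ≠ [])
    (hC : C ≠ [] ∨ P.length = 1) (hQ : G.IsPathList x₁ x₂ Q) (hQL : ∀ a ∈ Q, a ∉ L)
    (hy : G.Adj y x₁) (hx : ∀ p ∈ P.getLast?, G.Adj x₂ p)
    (hPC : ∀ p ∈ P.head?, ∀ c ∈ C.head?, G.Adj p c) : False := by
  classical
  set M := A ++ y :: (Q ++ (P.reverse ++ C))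
  have hperm : M.Perm (L ++ Q) := by
    rw [hdec, List.perm_iff_count]
    intro a
    simp only [M, List.count_append, List.count_cons, List.count_reverse]
    omega
  obtain ⟨hAy, hyPC⟩ := List.isChain_split.mp (hdec ▸ hL.isChain)
  have hPC' := hyPC.tail
  have hM : G.IsPathList u v M := by
    refine ⟨List.isChain_split.mpr ⟨hAy, ?_⟩, hperm.nodup_iff.mpr ?_, ?_, ?_⟩
    · refine (hQ.isChain.append ((List.isChain_reverse.mpr
        (hPC'.left_of_append.imp fun _ _ h ↦ h.symm)).append hPC'.right_of_append ?_) ?_).cons ?_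
      · simpa [List.getLast?_reverse] using hPC
      · simpa [hQ.getLast?_eq, List.head?_append, List.head?_reverse, hP] using hx
      · simpa [List.head?_append, hQ.head?_eq] using hy
    · exact List.nodup_append.mpr ⟨hL.nodup, hQ.nodup, fun a ha b hb hab ↦ hQL b hb (hab ▸ ha)⟩
    · simpa [M, hdec, List.head?_append] using hL.head?_eq
    · have := hL.getLast?_eq
      rcases hC with hC | hP1
      · obtain ⟨c, hc⟩ := Option.isSome_iff_exists.mp (List.getLast?_isSome.mpr hC)
        simpa [M, hdec, List.getLast?_cons, List.getLast?_append, hc] using this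
      · obtain ⟨p, rfl⟩ := List.length_eq_one_iff.mp hP1
        simpa [M, hdec, List.getLast?_cons, List.getLast?_append, hQ.getLast?_eq] using this
  have := hL.length_le M hM
  rw [hperm.length_eq, List.length_append] at this
  have := List.length_pos_iff.mpr (List.ne_nil_of_mem (List.mem_of_mem_head? hQ.head?_eq))
  omega

theorem IsLongestPathList_s13.false_of_detour_cross {y₁ z₁ y₂ z₂ x₁ x₂ : V} {L A B C Q : List V}
    (hL : G.IsLongestPathList_s13 u v L) (hdec : L = A ++ y₁ :: z₁ :: (B ++ y₂ :: z₂ :: C))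
    (hQ : G.IsPathList x₁ x₂ Q) (hQL : ∀ a ∈ Q, a ∉ L) (hy₁ : G.Adj y₁ x₁) (hy₂ : G.Adj x₂ y₂)
    (hz : G.Adj z₁ z₂) : False :=
  hL.false_of_detour (P := z₁ :: B ++ [y₂]) (C := z₂ :: C) (by simpa using hdec)
    (List.cons_ne_nil _ _) (Or.inl (List.cons_ne_nil _ _)) hQ hQL hy₁
    (by simp [List.getLast?_cons, List.getLast?_append, hy₂]) (by simpa)

def reachAvoiding (G : SimpleGraph V) (s : Set V) (w : V) : Set V :=
  {x | ∃ p : G.Walk w x, ∀ a ∈ p.support, a ∉ s}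

theorem mem_reachAvoiding_self (hw : w ∉ s) : w ∈ G.reachAvoiding s w :=
  ⟨.nil, by simpa using hw⟩

theorem notMem_of_mem_reachAvoiding (hx : x ∈ G.reachAvoiding s w) : x ∉ s :=
  let ⟨p, hp⟩ := hx
  hp x p.end_mem_support

theorem mem_reachAvoiding_of_adj (hx : x ∈ G.reachAvoiding s w) (hxy : G.Adj x y) (hy : y ∉ s) :
    y ∈ G.reachAvoiding s w :=
  let ⟨p, hp⟩ := hx
  ⟨p.concat hxy, by simpa [Walk.support_concat, or_imp, forall_and] using ⟨hp, hy⟩⟩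

theorem exists_isPathList_of_mem_reachAvoiding [DecidableEq V] {x₁ x₂ : V}
    (h₁ : x₁ ∈ G.reachAvoiding s w) (h₂ : x₂ ∈ G.reachAvoiding s w) :
    ∃ Q, G.IsPathList x₁ x₂ Q ∧ ∀ a ∈ Q, a ∉ s := by
  obtain ⟨p₁, hp₁⟩ := h₁
  obtain ⟨p₂, hp₂⟩ := h₂
  let q := (p₁.reverse.append p₂).toPath
  refine ⟨q.1.support, q.2.isPathList_support, fun a ha ↦ ?_⟩
  have := Walk.support_toPath_subset_support _ ha
  simp only [Walk.support_append, Walk.support_reverse, List.mem_append, List.mem_reverse] at this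
  rcases this with h | h
  · exact hp₁ a h
  · exact hp₂ a (List.mem_of_mem_tail h)

theorem IsLongestPathList_s13.false_of_consecutive [DecidableEq V] {L : List V} {z x₁ x₂ : V}
    (hL : G.IsLongestPathList_s13 u v L) (hyz : [y, z] <:+: L)
    (hx₁ : x₁ ∈ G.reachAvoiding {a | a ∈ L} w) (hx₂ : x₂ ∈ G.reachAvoiding {a | a ∈ L} w)
    (hy : G.Adj y x₁) (hz : G.Adj z x₂) : False := by
  obtain ⟨A, B, hdec⟩ := hyz
  replace hdec : L = A ++ y :: z :: B := by simp [← hdec]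
  obtain ⟨Q, hQ, hQL⟩ := exists_isPathList_of_mem_reachAvoiding hx₁ hx₂
  have hzB : (z :: B).IsChain G.Adj := (List.isChain_split.mp (hdec ▸ hL.isChain)).2.tail
  exact hL.false_of_detour (P := [z]) hdec (List.cons_ne_nil _ _)
    (Or.inr rfl) hQ hQL hy (by simpa using hz.symm) (by simpa using (List.isChain_cons.mp hzB).1)

theorem IsLongestPathList_s13.false_of_crossing [DecidableEq V] {L : List V} {y₁ z₁ y₂ z₂ x₁ x₂ : V}
    (hL : G.IsLongestPathList_s13 u v L) (h₁ : [y₁, z₁] <:+: L) (h₂ : [y₂, z₂] <:+: L) (hy : y₁ ≠ y₂)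
    (hx₁ : x₁ ∈ G.reachAvoiding {a | a ∈ L} w) (hx₂ : x₂ ∈ G.reachAvoiding {a | a ∈ L} w)
    (hy₁ : G.Adj y₁ x₁) (hy₂ : G.Adj y₂ x₂) (hz : G.Adj z₁ z₂) : False := by
  have hz₁ : z₁ ≠ y₂ := by rintro rfl; exact hL.false_of_consecutive h₁ hx₁ hx₂ hy₁ hy₂
  have hz₂ : z₂ ≠ y₁ := by rintro rfl; exact hL.false_of_consecutive h₂ hx₂ hx₁ hy₂ hy₁
  obtain ⟨A, B, C, hdec | hdec⟩ := List.exists_eq_append_of_infix_pair h₁ h₂ hy hz₁ hz₂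
  · obtain ⟨Q, hQ, hQL⟩ := exists_isPathList_of_mem_reachAvoiding hx₁ hx₂
    exact hL.false_of_detour_cross hdec hQ hQL hy₁ hy₂.symm hz
  · obtain ⟨Q, hQ, hQL⟩ := exists_isPathList_of_mem_reachAvoiding hx₂ hx₁
    exact hL.false_of_detour_cross hdec hQ hQL hy₂ hy₁.symm hz.symm

theorem IsLongestPathList_s13.exists_mem_forall_not_adj [DecidableEq V] {L : List V}
    (hL : G.IsLongestPathList_s13 u v L) (huv : u ≠ v) :
    ∃ r ∈ L, ∀ x ∈ G.reachAvoiding {a | a ∈ L} w, ¬ G.Adj r x := by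
  obtain ⟨z, B, rfl⟩ : ∃ z B, L = u :: z :: B := by
    have h₁ := hL.head?_eq
    have h₂ := hL.getLast?_eq
    rcases L with _ | ⟨a, _ | ⟨z, B⟩⟩ <;> simp_all
  by_contra! h
  obtain ⟨x₁, hx₁, hu⟩ := h u (by simp)
  obtain ⟨x₂, hx₂, hz⟩ := h z (by simp)
  exact hL.false_of_consecutive ⟨[], B, rfl⟩ hx₁ hx₂ hu hz

theorem IsLongestPathList_s13.isIndependentSet_insert_image_nextOr [DecidableEq V] {L : List V}
    (hL : G.IsLongestPathList_s13 u v L) (hw : w ∉ L) {D : Finset V}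
    (hD : ∀ y ∈ D, y ∈ L.dropLast ∧ ∃ x ∈ G.reachAvoiding {a | a ∈ L} w, G.Adj y x) :
    G.IsIndependentSet (insert w (D.image fun y ↦ L.nextOr y y)) := by
  have hwR := mem_reachAvoiding_self (G := G) (s := {a | a ∈ L}) hw
  have hsucc {y} (hy : y ∈ D) : [y, L.nextOr y y] <:+: L :=
    List.nextOr_infix_of_mem_dropLast (hD y hy).1 y
  have hwsucc {y} (hy : y ∈ D) : ¬ G.Adj w (L.nextOr y y) := fun h ↦
    let ⟨x, hx, hyx⟩ := (hD y hy).2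
    hL.false_of_consecutive (hsucc hy) hx hwR hyx h.symm
  simp only [IsIndependentSet, mem_insert, mem_image]
  rintro _ (rfl | ⟨y₁, hy₁, rfl⟩) _ (rfl | ⟨y₂, hy₂, rfl⟩) hadj
  · exact hadj.ne rfl
  · exact hwsucc hy₂ hadj
  · exact hwsucc hy₁ hadj.symm
  · obtain ⟨x₁, hx₁, hyx₁⟩ := (hD y₁ hy₁).2
    obtain ⟨x₂, hx₂, hyx₂⟩ := (hD y₂ hy₂).2
    rcases eq_or_ne y₁ y₂ with rfl | hne
    · exact hadj.ne rfl
    · exact hL.false_of_crossing (hsucc hy₁) (hsucc hy₂) hne hx₁ hx₂ hyx₁ hyx₂ hadj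

theorem IsLongestPathList_s13.exists_isIndependentSet_card_le [DecidableEq V] {L : List V}
    (hL : G.IsLongestPathList_s13 u v L) (hw : w ∉ L) {N : Finset V}
    (hN : ∀ y ∈ N, y ∈ L ∧ ∃ x ∈ G.reachAvoiding {a | a ∈ L} w, G.Adj y x) :
    ∃ I, G.IsIndependentSet I ∧ N.card ≤ I.card := by
  set D := N.filter (· ∈ L.dropLast)
  have hDL : ∀ y ∈ D, y ∈ L.dropLast := fun y hy ↦ (mem_filter.mp hy).2
  refine ⟨_, hL.isIndependentSet_insert_image_nextOr hw fun y hy ↦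
    ⟨hDL y hy, (hN y (mem_filter.mp hy).1).2⟩, ?_⟩
  have hND : N.erase v ⊆ D := fun y hy ↦ by
    obtain ⟨hyv, hyN⟩ := mem_erase.mp hy
    refine mem_filter.mpr ⟨hyN, List.mem_dropLast_of_mem_of_ne_getLast? (hN y hyN).1 ?_⟩
    simpa [hL.getLast?_eq] using hyv
  have hwD : w ∉ D.image fun y ↦ L.nextOr y y := by
    simp only [mem_image, not_exists, not_and]
    exact fun y hy hyw ↦ hw (hyw ▸ List.nextOr_mem (List.mem_of_mem_dropLast (hDL y hy)))
  rw [card_insert_of_notMem hwD, card_image_of_injOn (hL.nodup.injOn_nextOr.mono hDL)]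
  have := card_le_card hND
  have := pred_card_le_card_erase (s := N) (a := v)
  omega

theorem IsKConnected.preconnected [Fintype V] {k : ℕ} (hk : G.IsKConnected k) (hk0 : 0 < k) :
    G.Preconnected := fun u v ↦
  let ⟨q⟩ := (hk.2 ∅ hk0).preconnected ⟨u, by simp⟩ ⟨v, by simp⟩
  ⟨q.map (Embedding.induce _).toHom⟩

theorem IsKConnected.le_card_of_separates_s13 [Fintype V] {k : ℕ} (hk : G.IsKConnected k)
    {N : Finset V} {R : Set V} (hR : ∀ x ∈ R, ∀ y, G.Adj x y → y ∉ N → y ∈ R)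
    (hw : w ∈ R) (hwN : w ∉ N) (hx : x ∉ R) (hxN : x ∉ N) : k ≤ N.card := by
  by_contra! hN
  obtain ⟨q⟩ := (hk.2 N hN).preconnected ⟨w, hwN⟩ ⟨x, hxN⟩
  let p := q.map (Embedding.induce _).toHom
  obtain ⟨d, hd, hdR, hdR'⟩ := p.exists_boundary_dart R hw hx
  obtain ⟨a, -, ha⟩ :=
    List.mem_map.mp (Walk.support_map _ _ ▸ p.dart_snd_mem_support_of_mem_darts hd)
  exact hdR' (hR _ hdR _ d.adj (ha ▸ a.2))

end PathList

theorem IsKConnected.isHamiltonianConnected {G : SimpleGraph V} {k : ℕ} (hk : G.IsKConnected k)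
    (hα : ∀ S, G.IsIndependentSet S → S.card < k) : G.IsHamiltonianConnected := by
  classical
  intro u v huv
  have hk0 : 0 < k := by simpa using hα ∅ (by simp [IsIndependentSet])
  obtain ⟨L, hL⟩ := (hk.preconnected hk0 u v).exists_isLongestPathList
  by_contra hham
  obtain ⟨w, hw⟩ : ∃ w, w ∉ L := by
    by_contra! h
    exact hham (hL.exists_isHamiltonian h)
  obtain ⟨r, hrL, hr⟩ := hL.exists_mem_forall_not_adj (w := w) huv
  set R := G.reachAvoiding {a | a ∈ L} w
  set N := univ.filter fun y ↦ y ∈ L ∧ ∃ x ∈ R, G.Adj y x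
  have hkN : k ≤ N.card := by
    refine hk.le_card_of_separates_s13 (R := R) (fun x hx y hxy hyN ↦ ?_) (mem_reachAvoiding_self hw)
      (by simp [N, hw]) (fun hrR ↦ notMem_of_mem_reachAvoiding hrR hrL)
      (by simpa [N] using fun _ : r ∈ L ↦ hr)
    refine mem_reachAvoiding_of_adj hx hxy fun hyL ↦ hyN ?_
    simpa [N] using ⟨hyL, x, hx, hxy.symm⟩
  obtain ⟨I, hI, hNI⟩ := hL.exists_isIndependentSet_card_le hw (N := N) fun y hy ↦ by
    simpa [N] using hy
  exact (hα I hI).not_ge (hkN.trans hNI)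

theorem lapSpecRad_nonneg (G : SimpleGraph V) [DecidableRel G.Adj] : 0 ≤ lapSpecRad G :=
  Real.iSup_nonneg fun i ↦ (G.posSemidef_lapMatrix ℝ).eigenvalues_nonneg i

theorem dotProduct_lapMatrix_mulVec_add_const (G : SimpleGraph V) [DecidableRel G.Adj]
    (x : V → ℝ) (c : ℝ) :
    (x + fun _ ↦ c) ⬝ᵥ (G.lapMatrix ℝ *ᵥ (x + fun _ ↦ c)) = x ⬝ᵥ (G.lapMatrix ℝ *ᵥ x) := by
  simp only [← toLinearMap₂'_apply', lapMatrix_toLinearMap₂', Pi.add_apply,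
    add_sub_add_right_eq_sub]

theorem IsIndependentSet.dotProduct_lapMatrix_mulVec_indicator {G : SimpleGraph V}
    [DecidableRel G.Adj] {S : Finset V} (hS : G.IsIndependentSet S) :
    (fun i ↦ if i ∈ S then 1 else 0) ⬝ᵥ (G.lapMatrix ℝ *ᵥ fun i ↦ if i ∈ S then 1 else 0) =
      ∑ i ∈ S, (G.degree i : ℝ) := by
  rw [lapMatrix, sub_mulVec, dotProduct_sub, dotProduct_mulVec_degMatrix,
    dotProduct_mulVec_adjMatrix, Finset.sum_eq_zero fun i _ ↦ Finset.sum_eq_zero fun j _ ↦ ?_]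
  · simp
  · by_cases hi : i ∈ S
    · by_cases hj : j ∈ S <;> simp [hi, hj, hS i hi j]
    · simp [hi]

theorem IsIndependentSet.card_mul_sum_degree_le {G : SimpleGraph V} [DecidableRel G.Adj]
    {S : Finset V} (hS : G.IsIndependentSet S) :
    (Fintype.card V : ℝ) * ∑ i ∈ S, (G.degree i : ℝ) ≤
      lapSpecRad G * #S * ((Fintype.card V : ℝ) - #S) := by
  rcases (Fintype.card V).eq_zero_or_pos with hn | hn
  · simp [hn, card_eq_zero.mp (Nat.le_zero.mp (hn ▸ card_le_univ S))]
  set n : ℝ := (Fintype.card V : ℝ)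
  set s : ℝ := (#S : ℝ)
  set x : V → ℝ := (fun i ↦ if i ∈ S then 1 else 0) + fun _ ↦ -(s / n)
  have hquad : x ⬝ᵥ (G.lapMatrix ℝ *ᵥ x) = ∑ i ∈ S, (G.degree i : ℝ) := by
    rw [dotProduct_lapMatrix_mulVec_add_const, hS.dotProduct_lapMatrix_mulVec_indicator]
  have hn0 : n ≠ 0 := by positivity
  have hnorm : x ⬝ᵥ x = s * (n - s) / n := by
    have hsq (i : V) : x i * x i = (if i ∈ S then 1 - 2 * (s / n) else 0) + (s / n) ^ 2 := by
      simp only [x, Pi.add_apply]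
      split_ifs <;> ring
    simp only [dotProduct, hsq, sum_add_distrib, sum_ite_mem, univ_inter, sum_const, card_univ,
      nsmul_eq_mul]
    field_simp
    ring
  have hray := (lapHerm G).dotProduct_mulVec_le_iSup_eigenvalues_mul x
  rw [hquad, hnorm] at hray
  calc n * ∑ i ∈ S, (G.degree i : ℝ) ≤ n * (lapSpecRad G * (s * (n - s) / n)) := by
        gcongr; exact hray
    _ = lapSpecRad G * s * (n - s) := by field_simp

theorem IsIndependentSet.card_mul_minDegree_le {G : SimpleGraph V} [DecidableRel G.Adj]
    {S : Finset V} (hS : G.IsIndependentSet S) (hne : S.Nonempty) :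
    (Fintype.card V : ℝ) * G.minDegree ≤ lapSpecRad G * ((Fintype.card V : ℝ) - #S) := by
  have hδ : (#S : ℝ) * G.minDegree ≤ ∑ i ∈ S, (G.degree i : ℝ) := by
    rw [← nsmul_eq_mul, ← sum_const]
    exact sum_le_sum fun i _ ↦ by exact_mod_cast G.minDegree_le_degree i
  refine le_of_mul_le_mul_left ?_ (Nat.cast_pos.mpr hne.card_pos : (0 : ℝ) < #S)
  calc (#S : ℝ) * (Fintype.card V * G.minDegree)
      = Fintype.card V * (#S * G.minDegree) := by ring
    _ ≤ Fintype.card V * ∑ i ∈ S, (G.degree i : ℝ) := by gcongr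
    _ ≤ lapSpecRad G * #S * (Fintype.card V - #S) := hS.card_mul_sum_degree_le
    _ = #S * (lapSpecRad G * (Fintype.card V - #S)) := by ring

end SimpleGraph

theorem laplacian_hamiltonian_connected_general (G : SimpleGraph V) [DecidableRel G.Adj] (k : ℕ)
    (hk : G.IsKConnected k)
    (hμ : lapSpecRad G <
      (Fintype.card V : ℝ) * (G.minDegree : ℝ) / ((Fintype.card V : ℝ) - k)) :
    G.IsHamiltonianConnected := by
  refine hk.isHamiltonianConnected fun S hS ↦ ?_
  by_contra! hkS
  obtain ⟨T, hT, hTne, hkT⟩ : ∃ T, G.IsIndependentSet T ∧ T.Nonempty ∧ k ≤ #T := by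
    rcases S.eq_empty_or_nonempty with rfl | hne
    · obtain ⟨a⟩ : Nonempty V := Fintype.card_pos_iff.mp (by have := hk.1; omega)
      exact ⟨{a}, by simp [IsIndependentSet], singleton_nonempty a, by simp_all⟩
    · exact ⟨S, hS, hne, hkS⟩
  have hnk : (0 : ℝ) < Fintype.card V - k := sub_pos.mpr (by exact_mod_cast hk.1)
  have hkT' : (k : ℝ) ≤ #T := by exact_mod_cast hkT
  have hT' := hT.card_mul_minDegree_le hTne
  rw [lt_div_iff₀ hnk] at hμ
  nlinarith [G.lapSpecRad_nonneg]

theorem laplacian_hamiltonian_connected (G : SimpleGraph V) [DecidableRel G.Adj] (k : ℕ)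
    (hn : 3 ≤ Fintype.card V) (hk : G.IsKConnected k)
    (hμ : lapSpecRad G <
      (Fintype.card V : ℝ) * (G.minDegree : ℝ) / ((Fintype.card V : ℝ) - k)) :
    G.IsHamiltonianConnected :=
  laplacian_hamiltonian_connected_general G k hk hμ
end
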